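/- arXiv:2009.08894 — 5 statements merged into one kernel-verified Lean document; each statement's English description precedes it below -/
import Mathlib

section
/- Let A be the symmetric bilinear form on ℝ² given by A[u,v] = u₁v₁ - 2u₂v₂, and let S = {x ∈ ℝ² : x₁ = 1, x₂ ∈ [-1,1]}. Then sup_{u,v ∈ S} |A[u,v]| = 3 while sup_{h ∈ S} |A[h,h]| = 1. -/
def S3 : Set (Fin 2 → ℝ) := {x | x 0 = 1 ∧ x 1 ∈ Set.Icc (-1 : ℝ) 1}

theorem stmt_3 :
    sSup {r : ℝ | ∃ u ∈ S3, ∃ v ∈ S3, r = |u 0 * v 0 - 2 * (u 1 * v 1)|} = 3 ∧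
    sSup {r : ℝ | ∃ h ∈ S3, r = |h 0 * h 0 - 2 * (h 1 * h 1)|} = 1 := by
  constructor
  · apply IsGreatest.csSup_eq
    constructor
    · refine ⟨![1, 1], ⟨rfl, by norm_num⟩, ![1, -1], ⟨rfl, by norm_num⟩, ?_⟩
      norm_num
    · rintro r ⟨u, ⟨hu0, hu1, hu2⟩, v, ⟨hv0, hv1, hv2⟩, rfl⟩
      rw [hu0, hv0]
      have h1 : |u 1| ≤ 1 := abs_le.2 ⟨hu1, hu2⟩
      have h2 : |v 1| ≤ 1 := abs_le.2 ⟨hv1, hv2⟩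
      have : |u 1 * v 1| ≤ 1 := by
        rw [abs_mul]; nlinarith [abs_nonneg (u 1), abs_nonneg (v 1)]
      rw [abs_le] at this
      rw [abs_le]; constructor <;> nlinarith
  · apply IsGreatest.csSup_eq
    constructor
    · refine ⟨![1, 0], ⟨rfl, by norm_num⟩, ?_⟩
      norm_num
    · rintro r ⟨h, ⟨h0, h1, h2⟩, rfl⟩
      rw [h0, abs_le]
      constructor <;> nlinarith
end

section
/- For any symmetric bilinear form A : E × E → ℝ on a finite-dimensional real vector space and any compact convex set S ⊂ E, sup_{u,v ∈ S} |A[u,v]| ≤ 3 · sup_{h ∈ S} |A[h,h]|. -/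
theorem stmt_4 {E : Type*} [NormedAddCommGroup E] [NormedSpace ℝ E]
    [FiniteDimensional ℝ E]
    (A : E →ₗ[ℝ] E →ₗ[ℝ] ℝ)
    (hsymm : ∀ u v : E, A u v = A v u)
    (S : Set E) (hScomp : IsCompact S) (hSconv : Convex ℝ S) :
    ∀ u ∈ S, ∀ v ∈ S,
      |A u v| ≤ 3 * sSup {r : ℝ | ∃ h ∈ S, r = |A h h|} := by
  intro u hu v hv
  -- continuity of h ↦ A h h
  have hcont : Continuous fun h : E => A h h := by
    let A' : E →ₗ[ℝ] (E →L[ℝ] ℝ) :=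
      (LinearMap.toContinuousLinearMap :
        (E →ₗ[ℝ] ℝ) ≃ₗ[ℝ] (E →L[ℝ] ℝ)).toLinearMap.comp A
    let A'' : E →L[ℝ] (E →L[ℝ] ℝ) := LinearMap.toContinuousLinearMap A'
    have : Continuous fun h : E => A'' h h := by
      have h1 : Continuous fun p : E × E => A'' p.1 p.2 :=
        A''.continuous₂
      exact h1.comp (continuous_id.prodMk continuous_id)
    simpa [A'', A'] using this
  set T : Set ℝ := {r : ℝ | ∃ h ∈ S, r = |A h h|} with hT
  have hTeq : T = (fun h => |A h h|) '' S := by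
    ext r; simp [hT, Set.mem_image, eq_comm]
  have hTcomp : IsCompact T := by
    rw [hTeq]; exact hScomp.image (hcont.abs)
  have hbdd : BddAbove T := hTcomp.bddAbove
  have hle : ∀ h ∈ S, |A h h| ≤ sSup T := fun h hh =>
    le_csSup hbdd ⟨h, hh, rfl⟩
  set m : E := (1/2 : ℝ) • u + (1/2 : ℝ) • v with hm
  have hmS : m ∈ S := hSconv hu hv (by norm_num) (by norm_num) (by norm_num)
  have hkey : A u v = 2 * A m m - (1/2) * A u u - (1/2) * A v v := by
    simp only [hm, map_add, map_smul, LinearMap.add_apply, LinearMap.smul_apply,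
      smul_eq_mul]
    rw [hsymm v u]
    ring
  have h1 := hle u hu
  have h2 := hle v hv
  have h3 := hle m hmS
  calc |A u v| = |2 * A m m - (1/2) * A u u - (1/2) * A v v| := by rw [hkey]
    _ ≤ |2 * A m m| + |(1/2) * A u u| + |(1/2) * A v v| := by
        exact (abs_sub _ _).trans (by gcongr; exact abs_sub _ _)
    _ = 2 * |A m m| + (1/2) * |A u u| + (1/2) * |A v v| := by
        rw [abs_mul, abs_mul, abs_mul, show |(2:ℝ)| = 2 by norm_num,
          show |(1/2:ℝ)| = 1/2 by norm_num]
    _ ≤ 2 * sSup T + (1/2) * sSup T + (1/2) * sSup T := by gcongr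
    _ = 3 * sSup T := by ring
end

section
/- For any symmetric trilinear form A : E × E × E → ℝ on a finite-dimensional real vector space and any compact convex set S ⊂ E, sup_{u,v ∈ S} |A[u,u,v]| ≤ 6 · sup_{h ∈ S} |A[h,h,h]|. -/
theorem LinearMap.continuous_uncurry₃ {𝕜 E F G H : Type*} [NontriviallyNormedField 𝕜]
    [CompleteSpace 𝕜] [NormedAddCommGroup E] [NormedSpace 𝕜 E] [FiniteDimensional 𝕜 E]
    [NormedAddCommGroup F] [NormedSpace 𝕜 F] [FiniteDimensional 𝕜 F]
    [NormedAddCommGroup G] [NormedSpace 𝕜 G] [FiniteDimensional 𝕜 G]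
    [NormedAddCommGroup H] [NormedSpace 𝕜 H]
    (A : E →ₗ[𝕜] F →ₗ[𝕜] G →ₗ[𝕜] H) :
    Continuous fun p : E × F × G => A p.1 p.2.1 p.2.2 := by
  let C : E →L[𝕜] F →L[𝕜] G →L[𝕜] H := LinearMap.toContinuousLinearMap
    ((LinearMap.toContinuousLinearMap.toLinearMap ∘ₗ
      LinearMap.compRight 𝕜 LinearMap.toContinuousLinearMap.toLinearMap) ∘ₗ A)
  change Continuous fun p : E × F × G => C p.1 p.2.1 p.2.2
  fun_prop

section SymmetricTrilinear

variable {E : Type*} [AddCommGroup E] [Module ℝ E] (A : E →ₗ[ℝ] E →ₗ[ℝ] E →ₗ[ℝ] ℝ)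

theorem cube_smul_add_smul (h12 : ∀ u v w : E, A u v w = A v u w)
    (h23 : ∀ u v w : E, A u v w = A u w v) (s t : ℝ) (u v : E) :
    A (s • u + t • v) (s • u + t • v) (s • u + t • v) =
      s ^ 3 * A u u u + 3 * s ^ 2 * t * A u u v + 3 * s * t ^ 2 * A u v v + t ^ 3 * A v v v := by
  have huvu : A u v u = A u u v := h23 u v u
  have hvuu : A v u u = A u u v := (h12 v u u).trans huvu
  have hvvu : A v v u = A u v v := (h23 v v u).trans (h12 v u v)
  have hvuv : A v u v = A u v v := h12 v u v
  simp only [map_add, map_smul, LinearMap.add_apply, LinearMap.smul_apply, smul_eq_mul]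
  rw [huvu, hvuu, hvvu, hvuv]
  ring

/-- Evaluating the cubic form at `u`, `v` and the two interior points `x₁ = (u + 2v)/3`,
`x₂ = (2u + v)/3` of the segment isolates the mixed term, with total weight
`(54 + 27 + 6 + 15) / 18 = 17/3 ≤ 6`. -/
theorem abs_apply_le_of_convex (h12 : ∀ u v w : E, A u v w = A v u w)
    (h23 : ∀ u v w : E, A u v w = A u w v) {S : Set E} (hS : Convex ℝ S) {M : ℝ}
    (hM : ∀ h ∈ S, |A h h h| ≤ M) {u v : E} (hu : u ∈ S) (hv : v ∈ S) :
    |A u u v| ≤ 6 * M := by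
  set x₁ : E := (1 / 3 : ℝ) • u + (2 / 3 : ℝ) • v
  set x₂ : E := (2 / 3 : ℝ) • u + (1 / 3 : ℝ) • v
  have key : 18 * A u u v = 54 * A x₂ x₂ x₂ - 27 * A x₁ x₁ x₁ + 6 * A v v v - 15 * A u u u := by
    simp only [x₁, x₂, cube_smul_add_smul A h12 h23]
    ring
  have hx₁ := hM x₁ (hS hu hv (by norm_num) (by norm_num) (by norm_num))
  have hx₂ := hM x₂ (hS hu hv (by norm_num) (by norm_num) (by norm_num))
  have hu' := hM u hu
  have hv' := hM v hv
  rw [abs_le] at *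
  constructor <;> linarith

end SymmetricTrilinear

theorem stmt_5 {E : Type*} [NormedAddCommGroup E] [NormedSpace ℝ E]
    [FiniteDimensional ℝ E]
    (A : E →ₗ[ℝ] E →ₗ[ℝ] E →ₗ[ℝ] ℝ)
    (hsymm12 : ∀ u v w : E, A u v w = A v u w)
    (hsymm23 : ∀ u v w : E, A u v w = A u w v)
    (S : Set E) (hScomp : IsCompact S) (hSconv : Convex ℝ S) :
    ∀ u ∈ S, ∀ v ∈ S,
      |A u u v| ≤ 6 * sSup {r : ℝ | ∃ h ∈ S, r = |A h h h|} := by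
  intro u hu v hv
  have hcont : Continuous fun h : E => A h h h :=
    A.continuous_uncurry₃.comp (continuous_id.prodMk (continuous_id.prodMk continuous_id))
  obtain ⟨C, hC⟩ := hScomp.exists_bound_of_continuousOn hcont.continuousOn
  have hbdd : BddAbove {r : ℝ | ∃ h ∈ S, r = |A h h h|} := ⟨C, by
    rintro r ⟨h, hh, rfl⟩
    exact hC h hh⟩
  exact abs_apply_le_of_convex A hsymm12 hsymm23 hSconv
    (fun h hh => le_csSup hbdd ⟨h, hh, rfl⟩) hu hv
end

section
/- Consider the iteration x_{k+1} chosen so that F(x_{k+1}) ≤ F(x̄_{k+1}) where F(x̄_{k+1}) ≤ (1-γ_k)F(x_k) + γ_k F* + δ_{k+1}, with γ_k = a_{k+1}/A_{k+1}, A_k = ∑_{i=1}^k a_i (a_i > 0), A_0 = 0. Then for all k ≥ 0: A_k F(x_k) ≤ A_k F* + ∑_{i=1}^k A_i δ_i. -/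
/-!
Writing `Aₖ₊₁ = Aₖ + aₖ₊₁` and `γₖ Aₖ₊₁ = aₖ₊₁`, multiplying the step inequality by `Aₖ₊₁` gives
`Aₖ₊₁ (F(xₖ₊₁) - F*) ≤ Aₖ (F(xₖ) - F*) + Aₖ₊₁ δₖ₊₁`: the weighted residual grows by at most
`Aₖ₊₁ δₖ₊₁` per step. Since `A₀ = 0`, summing these increments gives the bound.
-/

open Finset

lemma mul_le_of_le_one_sub_div_mul_add {A a f f' δ : ℝ} (hpos : 0 < A + a)
    (h : f' ≤ (1 - a / (A + a)) * f + δ) :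
    (A + a) * f' ≤ A * f + (A + a) * δ := by
  have hcoef : (A + a) * (1 - a / (A + a)) = A := by
    field_simp
    ring
  calc (A + a) * f' ≤ (A + a) * ((1 - a / (A + a)) * f + δ) :=
        mul_le_mul_of_nonneg_left h hpos.le
    _ = A * f + (A + a) * δ := by rw [mul_add, ← mul_assoc, hcoef]

lemma le_sum_Icc_of_le_add {u v : ℕ → ℝ} (h0 : u 0 ≤ 0) (hstep : ∀ k, u (k + 1) ≤ u k + v (k + 1))
    (n : ℕ) : u n ≤ ∑ i ∈ Icc 1 n, v i := by
  induction n with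
  | zero => simpa using h0
  | succ n ih =>
    rw [sum_Icc_succ_top (Nat.le_add_left 1 n)]
    linarith [hstep n]

lemma sum_Icc_succ_pos {a : ℕ → ℝ} (ha : ∀ i, 1 ≤ i → 0 < a i) (k : ℕ) :
    0 < ∑ i ∈ Icc 1 (k + 1), a i :=
  sum_pos (fun i hi ↦ ha i (mem_Icc.mp hi).1) ⟨1, mem_Icc.mpr ⟨le_rfl, Nat.le_add_left 1 k⟩⟩

theorem stmt_13_general {X : Type*} (F : X → ℝ) (Fstar : ℝ) (x xbar : ℕ → X)
    (a δ A γ : ℕ → ℝ)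
    (ha : ∀ i, 1 ≤ i → 0 < a i)
    (hA : ∀ k, A k = ∑ i ∈ Finset.Icc 1 k, a i)
    (hγ : ∀ k, γ k = a (k + 1) / A (k + 1))
    (hmono : ∀ k, F (x (k + 1)) ≤ F (xbar (k + 1)))
    (hstep : ∀ k, F (xbar (k + 1)) ≤ (1 - γ k) * F (x k) + γ k * Fstar + δ (k + 1)) :
    ∀ k, A k * F (x k) ≤ A k * Fstar + ∑ i ∈ Finset.Icc 1 k, A i * δ i := by
  have hA_succ (k : ℕ) : A (k + 1) = A k + a (k + 1) := by
    rw [hA, hA, sum_Icc_succ_top (Nat.le_add_left 1 k)]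
  have hresidual (k : ℕ) : A (k + 1) * (F (x (k + 1)) - Fstar) ≤
      A k * (F (x k) - Fstar) + A (k + 1) * δ (k + 1) := by
    have hpos : 0 < A k + a (k + 1) := by rw [← hA_succ, hA]; exact sum_Icc_succ_pos ha k
    rw [hA_succ]
    apply mul_le_of_le_one_sub_div_mul_add hpos
    rw [← hA_succ, ← hγ]
    linarith [hmono k, hstep k]
  have hA_zero : A 0 = 0 := by simp [hA]
  intro k
  have hsum := le_sum_Icc_of_le_add (u := fun k ↦ A k * (F (x k) - Fstar)) (v := fun i ↦ A i * δ i)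
    (by simp [hA_zero]) hresidual k
  linarith [mul_sub (A k) (F (x k)) Fstar]

theorem stmt_13 {X : Type*} (F : X → ℝ) (Fstar : ℝ) (x xbar : ℕ → X)
    (a δ A γ : ℕ → ℝ)
    (ha : ∀ i, 1 ≤ i → 0 < a i) (hδ : ∀ i, 0 ≤ δ i)
    (hA : ∀ k, A k = ∑ i ∈ Finset.Icc 1 k, a i)
    (hγ : ∀ k, γ k = a (k + 1) / A (k + 1))
    (hmono : ∀ k, F (x (k + 1)) ≤ F (xbar (k + 1)))
    (hstep : ∀ k, F (xbar (k + 1)) ≤ (1 - γ k) * F (x k) + γ k * Fstar + δ (k + 1)) :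
    ∀ k, A k * F (x k) ≤ A k * Fstar + ∑ i ∈ Finset.Icc 1 k, A i * δ i :=
  stmt_13_general F Fstar x xbar a δ A γ ha hA hγ hmono hstep
end

section
/- With A_k = k(k+1)···(k+p) and a_k = A_k - A_{k-1}, for all k ≥ 1: (1/A_k) ∑_{i=1}^{k} a_i^{p+1}/A_i^p ≤ (p+1)^{p+1}/k^p. -/
/-! Writing `B = i(i+1)⋯(i+p-1)`, one has `A_i = B (i+p)` and `a_i = (p+1) B`, so each summand
`a_i^{p+1} / A_i^p = (p+1)^{p+1} B / (i+p)^p` is at most `(p+1)^{p+1}` because `B ≤ (i+p)^p`.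
Summing the `k` terms and using `A_k ≥ k^{p+1}` gives the bound. -/

open Finset

theorem prod_range_succ_add_sub_prod_range_succ_sub_one_add {R : Type*} [CommRing R]
    (n : ℕ) (x : R) :
    ∏ i ∈ range (n + 1), (x + i) - ∏ i ∈ range (n + 1), (x - 1 + i)
      = (n + 1) * ∏ i ∈ range n, (x + i) := by
  rw [prod_range_succ, prod_range_succ']
  have hshift : ∏ i ∈ range n, (x - 1 + (i + 1 : ℕ)) = ∏ i ∈ range n, (x + i) :=
    prod_congr rfl fun i _ => by push_cast; ring
  rw [hshift]
  push_cast
  ring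

section RisingProduct

variable {K : Type*} [Field K] [LinearOrder K] [IsStrictOrderedRing K]

theorem pow_le_prod_range_add {x : K} (hx : 0 ≤ x) (n : ℕ) :
    x ^ n ≤ ∏ i ∈ range n, (x + i) := by
  calc x ^ n = ∏ _i ∈ range n, x := by rw [prod_const, card_range]
    _ ≤ ∏ i ∈ range n, (x + i) :=
      prod_le_prod (fun _ _ => hx) fun i _ => le_add_of_nonneg_right i.cast_nonneg

theorem prod_range_add_le_pow {x : K} (hx : 0 ≤ x) (n : ℕ) :
    ∏ i ∈ range n, (x + i) ≤ (x + n) ^ n := by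
  calc ∏ i ∈ range n, (x + i) ≤ ∏ _i ∈ range n, (x + n) :=
        prod_le_prod (fun i _ => by positivity) fun i hi => by
          gcongr; exact_mod_cast (mem_range.mp hi).le
    _ = (x + n) ^ n := by rw [prod_const, card_range]

theorem pow_succ_div_pow_le_of_le_pow {n : ℕ} {B y c : K} (hB : 0 ≤ B) (hy : 0 ≤ y) (hc : 0 ≤ c)
    (hBy : B ≤ y ^ n) : (c * B) ^ (n + 1) / (B * y) ^ n ≤ c ^ (n + 1) := by
  refine div_le_of_le_mul₀ (by positivity) (by positivity) ?_
  calc (c * B) ^ (n + 1) = c ^ (n + 1) * B ^ n * B := by ring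
    _ ≤ c ^ (n + 1) * B ^ n * y ^ n := by gcongr
    _ = c ^ (n + 1) * (B * y) ^ n := by ring

theorem rising_increment_pow_div_le {x : K} (hx : 0 ≤ x) (n : ℕ) :
    (∏ i ∈ range (n + 1), (x + i) - ∏ i ∈ range (n + 1), (x - 1 + i)) ^ (n + 1)
        / (∏ i ∈ range (n + 1), (x + i)) ^ n
      ≤ ((n : K) + 1) ^ (n + 1) := by
  rw [prod_range_succ_add_sub_prod_range_succ_sub_one_add, prod_range_succ]
  exact pow_succ_div_pow_le_of_le_pow (prod_nonneg fun i _ => by positivity) (by positivity)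
    (by positivity) (prod_range_add_le_pow hx n)

end RisingProduct

theorem stmt_15_general (p : ℕ) (A : ℕ → ℝ)
    (hA : ∀ k, A k = ∏ i ∈ Finset.range (p + 1), ((k : ℝ) + i)) :
    ∀ k : ℕ, 1 ≤ k →
      (1 / A k) * ∑ i ∈ Finset.Icc 1 k, (A i - A (i - 1)) ^ (p + 1) / (A i) ^ p
        ≤ ((p : ℝ) + 1) ^ (p + 1) / (k : ℝ) ^ p := by
  intro k hk
  have hk₀ : (0 : ℝ) < k := by exact_mod_cast hk
  have hterm : ∀ i ∈ Icc 1 k, (A i - A (i - 1)) ^ (p + 1) / (A i) ^ p ≤ ((p : ℝ) + 1) ^ (p + 1) := by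
    intro i hi
    rw [hA, hA, Nat.cast_sub (mem_Icc.mp hi).1, Nat.cast_one]
    exact rising_increment_pow_div_le i.cast_nonneg p
  have hsum := sum_le_card_nsmul _ _ _ hterm
  rw [Nat.card_Icc, Nat.add_sub_cancel, nsmul_eq_mul] at hsum
  have hAk : (k : ℝ) ^ (p + 1) ≤ A k := hA k ▸ pow_le_prod_range_add hk₀.le (p + 1)
  calc (1 / A k) * ∑ i ∈ Icc 1 k, (A i - A (i - 1)) ^ (p + 1) / (A i) ^ p
      ≤ (1 / A k) * (k * ((p : ℝ) + 1) ^ (p + 1)) := by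
        gcongr
        exact one_div_nonneg.mpr ((pow_pos hk₀ _).le.trans hAk)
    _ ≤ (1 / (k : ℝ) ^ (p + 1)) * (k * ((p : ℝ) + 1) ^ (p + 1)) := by gcongr
    _ = ((p : ℝ) + 1) ^ (p + 1) / (k : ℝ) ^ p := by field_simp; ring

theorem stmt_15 (p : ℕ) (hp : 1 ≤ p) (A : ℕ → ℝ)
    (hA : ∀ k, A k = ∏ i ∈ Finset.range (p + 1), ((k : ℝ) + i)) :
    ∀ k : ℕ, 1 ≤ k →
      (1 / A k) * ∑ i ∈ Finset.Icc 1 k, (A i - A (i - 1)) ^ (p + 1) / (A i) ^ p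
        ≤ ((p : ℝ) + 1) ^ (p + 1) / (k : ℝ) ^ p :=
  stmt_15_general p A hA
end
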